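/- arXiv:1502.02633 — 3 statements merged into one kernel-verified Lean document; each statement's English description precedes it below -/
import Mathlib

section
/- Let q > 1 be a real number, k ≥ 1 an integer, and γ a complex number with |γ| = 1. Then the polynomial equation γ X^{2k} − (γ/√q) X^{2k−1} − X/√q + 1 = 0 has exactly 2k roots, all lying on the unit circle |X| = 1. -/
/-!
Multiplying by `√q` and writing `2k = m + 2`, a root `z` satisfies
`γ z^(m+1) (√q z - 1) = z - √q`. Since `|√q z - 1|² - |z - √q|² = (q - 1)(|z|² - 1)`, the
factor `(√q z - 1)/(z - √q)` has modulus `> 1`, `= 1` or `< 1` according as `|z|` is, and so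
does `z^(m+1)`; the two moduli can only multiply to `1` on the unit circle. A double root on the
unit circle would moreover satisfy `(m+1)√q (z² + 1) = (m + (m+2) q) z`, which is impossible
because `|z² + 1| ≤ 2` while `m + (m+2) q > 2 (m+1) √q`. So all `2k` roots are simple.
-/

open Polynomial

lemma norm_ofReal_mul_sub_one_sq_sub_norm_sub_ofReal_sq (s : ℝ) (z : ℂ) :
    ‖(s : ℂ) * z - 1‖ ^ 2 - ‖z - s‖ ^ 2 = (s ^ 2 - 1) * (‖z‖ ^ 2 - 1) := by
  simp only [Complex.sq_norm, Complex.normSq_apply, Complex.sub_re, Complex.sub_im,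
    Complex.mul_re, Complex.mul_im, Complex.ofReal_re, Complex.ofReal_im,
    Complex.one_re, Complex.one_im]
  ring

lemma norm_eq_one_of_norm_pow_mul_eq {s : ℝ} (hs : 1 < s) {z : ℂ} (j : ℕ)
    (h : ‖z‖ ^ j * ‖(s : ℂ) * z - 1‖ = ‖z - s‖) : ‖z‖ = 1 := by
  have key := norm_ofReal_mul_sub_one_sq_sub_norm_sub_ofReal_sq s z
  have hA := norm_nonneg ((s : ℂ) * z - 1)
  have hB := norm_nonneg (z - s)
  rcases lt_trichotomy ‖z‖ 1 with hz | hz | hz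
  · have hBA : ‖z - s‖ ≤ ‖(s : ℂ) * z - 1‖ :=
      h ▸ mul_le_of_le_one_left hA (pow_le_one₀ (norm_nonneg z) hz.le)
    nlinarith [mul_neg_of_pos_of_neg (by nlinarith : 0 < s ^ 2 - 1)
      (by nlinarith [norm_nonneg z] : ‖z‖ ^ 2 - 1 < 0)]
  · exact hz
  · have hAB : ‖(s : ℂ) * z - 1‖ ≤ ‖z - s‖ :=
      h ▸ le_mul_of_one_le_left hA (one_le_pow₀ hz.le)
    nlinarith [mul_pos (by nlinarith : 0 < s ^ 2 - 1) (by nlinarith : 0 < ‖z‖ ^ 2 - 1)]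

/-- `√q` times the polynomial of `roots_on_unit_circle`, for `s = √q` and `2k = m + 2`. -/
noncomputable def localZetaPoly (γ : ℂ) (s : ℝ) (m : ℕ) : ℂ[X] :=
  C (γ * s) * X ^ (m + 2) - C γ * X ^ (m + 1) - X + C (s : ℂ)

section localZetaPoly

variable {γ : ℂ} {s : ℝ} {m : ℕ}

lemma eval_localZetaPoly (z : ℂ) :
    (localZetaPoly γ s m).eval z = γ * s * z ^ (m + 2) - γ * z ^ (m + 1) - z + s := by
  simp [localZetaPoly]

lemma eval_derivative_localZetaPoly (z : ℂ) :
    (derivative (localZetaPoly γ s m)).eval z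
      = γ * s * (m + 2) * z ^ (m + 1) - γ * (m + 1) * z ^ m - 1 := by
  simp only [localZetaPoly, derivative_sub, derivative_mul, derivative_C,
    derivative_X_pow_succ, derivative_X, map_mul, map_add, map_natCast, map_one, Nat.cast_add,
    Nat.cast_one, eval_add, eval_sub, eval_mul, eval_C, eval_pow, eval_X, eval_natCast,
    eval_one, zero_mul, mul_zero, add_zero, zero_add]
  ring

lemma natDegree_localZetaPoly (hγ : γ ≠ 0) (hs : s ≠ 0) :
    (localZetaPoly γ s m).natDegree = m + 2 := by
  unfold localZetaPoly
  compute_degree!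

lemma localZetaPoly_ne_zero (hγ : γ ≠ 0) (hs : s ≠ 0) : localZetaPoly γ s m ≠ 0 := by
  intro h
  simpa [h] using (natDegree_localZetaPoly (m := m) hγ hs).symm

lemma norm_eq_one_of_isRoot_localZetaPoly (hs : 1 < s) (hγ : ‖γ‖ = 1) {z : ℂ}
    (hz : (localZetaPoly γ s m).IsRoot z) : ‖z‖ = 1 := by
  rw [IsRoot, eval_localZetaPoly] at hz
  have hfactor : γ * z ^ (m + 1) * ((s : ℂ) * z - 1) = z - s := by linear_combination hz
  refine norm_eq_one_of_norm_pow_mul_eq hs (m + 1) ?_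
  simpa [hγ] using congrArg (‖·‖) hfactor

lemma eval_derivative_localZetaPoly_ne_zero (hs : 1 < s) (hγ : ‖γ‖ = 1) {z : ℂ}
    (hz : (localZetaPoly γ s m).IsRoot z) : (derivative (localZetaPoly γ s m)).eval z ≠ 0 := by
  intro hder
  have hz1 := norm_eq_one_of_isRoot_localZetaPoly hs hγ hz
  rw [IsRoot, eval_localZetaPoly] at hz
  rw [eval_derivative_localZetaPoly] at hder
  -- eliminate `γ z^(m+1)` between the root and the critical-point equations
  have hquad : ((((m : ℝ) + 1) * s : ℝ) : ℂ) * (z ^ 2 + 1)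
      = (((m : ℝ) + ((m : ℝ) + 2) * s ^ 2 : ℝ) : ℂ) * z := by
    push_cast
    linear_combination ((s : ℂ) * z - 1) * z * hder
      - (((m : ℂ) + 2) * s * z - ((m : ℂ) + 1)) * hz
  have hm : (0 : ℝ) ≤ m := m.cast_nonneg
  have hnorm := congrArg (‖·‖) hquad
  rw [norm_mul, norm_mul, hz1, mul_one,
    Complex.norm_of_nonneg (by positivity : 0 ≤ ((m : ℝ) + 1) * s),
    Complex.norm_of_nonneg (by positivity : 0 ≤ (m : ℝ) + ((m : ℝ) + 2) * s ^ 2)] at hnorm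
  have htri : ‖z ^ 2 + 1‖ ≤ 2 :=
    (norm_add_le _ _).trans (by rw [norm_pow, hz1]; norm_num)
  nlinarith [mul_le_mul_of_nonneg_left htri (by positivity : (0 : ℝ) ≤ (m + 1) * s),
    mul_nonneg hm (sq_nonneg (s - 1)), mul_pos (by linarith : (0 : ℝ) < s) (sub_pos.mpr hs)]

lemma separable_localZetaPoly (hs : 1 < s) (hγ : ‖γ‖ = 1) : (localZetaPoly γ s m).Separable := by
  rw [separable_def, isCoprime_iff_aeval_ne_zero_of_isAlgClosed ℂ ℂ]
  intro z
  simp only [coe_aeval_eq_eval]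
  by_cases hz : (localZetaPoly γ s m).IsRoot z
  · exact Or.inr (eval_derivative_localZetaPoly_ne_zero hs hγ hz)
  · exact Or.inl hz

lemma card_roots_toFinset_localZetaPoly (hs : 1 < s) (hγ : ‖γ‖ = 1) :
    (localZetaPoly γ s m).roots.toFinset.card = m + 2 := by
  rw [Multiset.toFinset_card_of_nodup (nodup_roots (separable_localZetaPoly hs hγ)),
    ← (IsAlgClosed.splits _).natDegree_eq_card_roots,
    natDegree_localZetaPoly (norm_ne_zero_iff.mp (hγ ▸ one_ne_zero)) (by positivity)]

end localZetaPoly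

/-- For `q > 1`, `k ≥ 1` and `γ` on the unit circle, the equation
`γ X^{2k} − (γ/√q) X^{2k−1} − X/√q + 1 = 0` has exactly `2k` roots,
all lying on the unit circle. -/
theorem roots_on_unit_circle (q : ℝ) (hq : 1 < q) (k : ℕ) (hk : 1 ≤ k)
    (γ : ℂ) (hγ : ‖γ‖ = 1) :
    ∃ S : Finset ℂ, S.card = 2 * k ∧ (∀ z ∈ S, ‖z‖ = 1) ∧
      ∀ z : ℂ,
        (γ * z ^ (2 * k) - (γ / (Real.sqrt q : ℂ)) * z ^ (2 * k - 1)
            - z / (Real.sqrt q : ℂ) + 1 = 0) ↔ z ∈ S := by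
  set s := Real.sqrt q
  have hs : 1 < s := by simpa using Real.sqrt_lt_sqrt zero_le_one hq
  have hs0 : (s : ℂ) ≠ 0 := Complex.ofReal_ne_zero.mpr (by positivity)
  have hγ0 : γ ≠ 0 := norm_ne_zero_iff.mp (hγ ▸ one_ne_zero)
  obtain ⟨m, hm⟩ : ∃ m, 2 * k = m + 2 := ⟨2 * k - 2, by omega⟩
  refine ⟨(localZetaPoly γ s m).roots.toFinset, ?_, fun z hz => ?_, fun z => ?_⟩
  · rw [card_roots_toFinset_localZetaPoly hs hγ, hm]
  · exact norm_eq_one_of_isRoot_localZetaPoly hs hγ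
      (isRoot_of_mem_roots (Multiset.mem_toFinset.mp hz))
  · rw [Multiset.mem_toFinset, mem_roots (localZetaPoly_ne_zero hγ0 (by positivity)), IsRoot,
      eval_localZetaPoly, show 2 * k - 1 = m + 1 by omega, hm]
    have hscale : γ * s * z ^ (m + 2) - γ * z ^ (m + 1) - z + s
        = s * (γ * z ^ (m + 2) - γ / s * z ^ (m + 1) - z / s + 1) := by
      field_simp
    rw [hscale, mul_eq_zero, or_iff_right hs0]
end

section
/- Let u ∈ C, v ∈ R with v > 0, and suppose the Kummer confluent hypergeometric function satisfies ₁F₁(u, v, z) = 0 for some purely imaginary z ≠ 0. Then Re(u) = v/2. -/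
/-- The Kummer confluent hypergeometric function
`₁F₁(a, b, z) = Σ_{k≥0} (a)_k / ((b)_k k!) · z^k`,
where `(a)_k` is the Pochhammer symbol (rising factorial). -/
noncomputable def kummer (a b z : ℂ) : ℂ :=
  ∑' k : ℕ,
    ((ascPochhammer ℂ k).eval a / ((ascPochhammer ℂ k).eval b * (k.factorial : ℂ))) * z ^ k

/-
Along the imaginary axis, `f t = ₁F₁(u, v, i t)` solves `t f'' = i u f + (i t - v) f'`. For the
quantity `E = |f|² + 2 Im (f f̄')` (the imaginary part of `f f̄' - f̄ f' + i |f|²`), this ODE gives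
`(t ^ v E)' = (v - 2 Re u) t ^ (v - 1) |f|²`. The left side vanishes at `t = 0` (as `v > 0`) and
at a zero `t₀ > 0` of `f`, while `|f|² > 0` near `0` since `f 0 = 1`; so `v - 2 Re u = 0`.
A zero on the negative imaginary axis is moved to the positive one by complex conjugation.
-/

open Complex Filter Topology Set
open scoped Nat ComplexConjugate

def HasInfiniteRadius (c : ℕ → ℂ) : Prop :=
  ∀ R : ℝ, 0 < R → Summable fun n => ‖c n‖ * R ^ n

noncomputable def powSum (c : ℕ → ℂ) (z : ℂ) : ℂ := ∑' n, c n * z ^ n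

def derivCoeff (c : ℕ → ℂ) (n : ℕ) : ℂ := (n + 1) * c (n + 1)

theorem powSum_zero (c : ℕ → ℂ) : powSum c 0 = c 0 := by
  rw [powSum, tsum_eq_single 0 fun n hn => by simp [hn]]
  simp

namespace HasInfiniteRadius

variable {c : ℕ → ℂ} (hc : HasInfiniteRadius c)
include hc

theorem summable (z : ℂ) : Summable fun n => c n * z ^ n :=
  .of_norm_bounded (hc (‖z‖ + 1) (by positivity)) fun n => by
    rw [norm_mul, norm_pow]
    gcongr
    linarith

theorem natCast_mul : HasInfiniteRadius fun n => n * c n := fun R hR =>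
  .of_nonneg_of_le (fun n => by positivity) (fun n => by
    rw [norm_mul, Complex.norm_natCast, mul_assoc, show (2 * R) ^ n = 2 ^ n * R ^ n from mul_pow ..,
      mul_left_comm]
    gcongr
    exact_mod_cast Nat.lt_two_pow_self.le) (hc (2 * R) (by positivity))

theorem _root_.hasInfiniteRadius_derivCoeff : HasInfiniteRadius (derivCoeff c) := fun R hR => by
  have h := ((hc.natCast_mul R hR).comp_injective (add_left_injective 1)).mul_left R⁻¹
  refine h.congr fun n => ?_
  simp only [Function.comp_apply, derivCoeff, pow_succ]
  push_cast
  field_simp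

theorem powSum_add_natCast_mul (b z : ℂ) :
    powSum (fun n => (b + n) * c n) z = b * powSum c z + z * powSum (derivCoeff c) z := by
  have hshift : z * powSum (derivCoeff c) z = powSum (fun n => n * c n) z := by
    rw [powSum, powSum, (hc.natCast_mul.summable z).tsum_eq_zero_add, ← tsum_mul_left]
    simp only [derivCoeff, Nat.cast_zero, zero_mul, zero_add, Nat.cast_succ, pow_succ]
    exact tsum_congr fun n => by ring
  rw [hshift, powSum, powSum, powSum, ← tsum_mul_left,
    ← (hc.summable z).mul_left b |>.tsum_add (hc.natCast_mul.summable z)]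
  exact tsum_congr fun n => by ring

theorem hasDerivAt (z : ℂ) : HasDerivAt (powSum c) (powSum (derivCoeff c) z) z := by
  set R := ‖z‖ + 1
  have hR : 1 ≤ R := by simp [R]
  have hbound : ∀ n, ∀ y ∈ Metric.ball (0 : ℂ) R,
      ‖c n * (n * y ^ (n - 1))‖ ≤ ‖(n : ℂ) * c n‖ * R ^ n := fun n y hy => by
    rw [mem_ball_zero_iff] at hy
    rw [← mul_assoc, mul_comm (c n), norm_mul, norm_pow]
    gcongr
    exact (pow_le_pow_left₀ (norm_nonneg y) hy.le _).trans (pow_le_pow_right₀ hR (n.sub_le 1))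
  have hderiv := hasDerivAt_tsum_of_isPreconnected (hc.natCast_mul R (by linarith))
    Metric.isOpen_ball (convex_ball (0 : ℂ) R).isPreconnected
    (fun n y _ => (hasDerivAt_pow n y).const_mul (c n)) hbound (Metric.mem_ball_self (by linarith))
    (hc.summable 0) (y := z) (by simp [R])
  refine hderiv.congr_deriv ?_
  rw [powSum, (Summable.of_norm_bounded (hc.natCast_mul R (by linarith))
    fun n => hbound n z (by simp [R])).tsum_eq_zero_add]
  simp only [derivCoeff, Nat.cast_zero, zero_mul, mul_zero, zero_add, Nat.cast_succ,
    Nat.add_sub_cancel]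
  exact tsum_congr fun n => by ring

theorem kummer_ode_of_recurrence {a b : ℂ}
    (hrec : ∀ n : ℕ, (b + n) * derivCoeff c n = (a + n) * c n) (z : ℂ) :
    z * powSum (derivCoeff (derivCoeff c)) z + (b - z) * powSum (derivCoeff c) z
      - a * powSum c z = 0 := by
  have h₁ := (hasInfiniteRadius_derivCoeff hc).powSum_add_natCast_mul b z
  have h₂ := hc.powSum_add_natCast_mul a z
  rw [funext hrec] at h₁
  linear_combination h₂ - h₁

theorem hasDerivAt_mul_I (t : ℝ) :
    HasDerivAt (fun s : ℝ => powSum c (s * I)) (powSum (derivCoeff c) (t * I) * I) t := by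
  have h := (hc.hasDerivAt (t * I)).comp t ((hasDerivAt_id t).ofReal_comp.mul_const I)
  simp only [id, ofReal_one, one_mul] at h
  exact h

end HasInfiniteRadius

theorem norm_ascPochhammer_eval_le {𝕜 : Type*} [NormedField 𝕜] {a b : 𝕜} {M : ℝ} (hM : 0 ≤ M)
    (hab : ∀ k : ℕ, ‖a + k‖ ≤ M * ‖b + k‖) (n : ℕ) :
    ‖(ascPochhammer 𝕜 n).eval a‖ ≤ M ^ n * ‖(ascPochhammer 𝕜 n).eval b‖ := by
  induction n with
  | zero => simp
  | succ n ih =>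
    rw [ascPochhammer_succ_eval, ascPochhammer_succ_eval, norm_mul, norm_mul, pow_succ,
      mul_mul_mul_comm]
    exact mul_le_mul ih (hab n) (norm_nonneg _) (by positivity)

theorem ascPochhammer_eval_ne_zero_of_re_pos {b : ℂ} (hb : 0 < b.re) (n : ℕ) :
    (ascPochhammer ℂ n).eval b ≠ 0 := by
  rw [Ne, ascPochhammer_eval_eq_zero_iff]
  rintro ⟨k, -, hk⟩
  have := congrArg re hk
  simp only [natCast_re, neg_re] at this
  linarith [k.cast_nonneg (α := ℝ)]

noncomputable def kummerCoeff (a b : ℂ) (n : ℕ) : ℂ :=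
  (ascPochhammer ℂ n).eval a / ((ascPochhammer ℂ n).eval b * (n ! : ℂ))

theorem kummer_eq_powSum (a b : ℂ) : kummer a b = powSum (kummerCoeff a b) := rfl

theorem kummerCoeff_zero (a b : ℂ) : kummerCoeff a b 0 = 1 := by
  simp [kummerCoeff]

theorem conj_kummerCoeff (a b : ℂ) (n : ℕ) :
    conj (kummerCoeff a b n) = kummerCoeff (conj a) (conj b) n := by
  simp only [kummerCoeff, map_div₀, map_mul, map_natCast, ← Polynomial.eval_map_apply,
    ascPochhammer_map]

theorem conj_kummer (a b z : ℂ) : conj (kummer a b z) = kummer (conj a) (conj b) (conj z) := by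
  simp only [kummer_eq_powSum, powSum, Complex.conj_tsum, map_mul, map_pow, conj_kummerCoeff]

section

variable {a b : ℂ} (hb : 0 < b.re)
include hb

theorem hasInfiniteRadius_kummerCoeff : HasInfiniteRadius (kummerCoeff a b) := fun R hR => by
  -- `‖a + k‖ ≤ M ‖b + k‖` makes the coefficients `O(M ^ n / n!)`, bounded by an exponential series.
  set M := 1 + ‖a‖ / b.re
  have hab : ∀ k : ℕ, ‖a + k‖ ≤ M * ‖b + k‖ := fun k => by
    have hre : b.re + k ≤ ‖b + k‖ := by simpa using re_le_norm (b + k)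
    calc ‖a + k‖ ≤ ‖a‖ + k := by simpa using norm_add_le a k
      _ ≤ M * (b.re + k) := by
        have hx : ‖a‖ / b.re * b.re = ‖a‖ := div_mul_cancel₀ _ hb.ne'
        nlinarith [mul_nonneg (div_nonneg (norm_nonneg a) hb.le) (k.cast_nonneg (α := ℝ))]
      _ ≤ M * ‖b + k‖ := by gcongr
  refine .of_nonneg_of_le (fun n => by positivity) (fun n => ?_)
    (Real.summable_pow_div_factorial (M * R))
  have hbn := norm_pos_iff.mpr (ascPochhammer_eval_ne_zero_of_re_pos hb n)
  have hquot : ‖(ascPochhammer ℂ n).eval a‖ / ‖(ascPochhammer ℂ n).eval b‖ ≤ M ^ n :=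
    (div_le_iff₀ hbn).2 (norm_ascPochhammer_eval_le (by positivity) hab n)
  calc ‖kummerCoeff a b n‖ * R ^ n
      = ‖(ascPochhammer ℂ n).eval a‖ / ‖(ascPochhammer ℂ n).eval b‖ * R ^ n / n ! := by
        rw [kummerCoeff, norm_div, norm_mul, Complex.norm_natCast]
        ring
    _ ≤ (M * R) ^ n / n ! := by
        rw [mul_pow]
        gcongr

theorem derivCoeff_kummerCoeff (n : ℕ) :
    (b + n) * derivCoeff (kummerCoeff a b) n = (a + n) * kummerCoeff a b n := by
  have h := ascPochhammer_eval_ne_zero_of_re_pos hb (n + 1)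
  rw [ascPochhammer_succ_eval, mul_ne_zero_iff] at h
  obtain ⟨hbn, hb₀⟩ := h
  simp only [derivCoeff, kummerCoeff, ascPochhammer_succ_eval, Nat.factorial_succ]
  push_cast
  field_simp

end

theorem hasDerivAt_rpow_mul_energy {f f' f'' : ℝ → ℂ} {u : ℂ} {v t : ℝ} (ht : 0 < t)
    (hf : HasDerivAt f (f' t) t) (hf' : HasDerivAt f' (f'' t) t)
    (hode : t * f'' t = I * u * f t + (I * t - v) * f' t) :
    HasDerivAt (fun s => s ^ v * (normSq (f s) + 2 * (f s * conj (f' s)).im))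
      ((v - 2 * u.re) * (t ^ (v - 1) * normSq (f t))) t := by
  set H : ℝ → ℂ := fun s =>
    ((s ^ v : ℝ) : ℂ) * (f s * conj (f' s) - conj (f s) * f' s + I * (f s * conj (f s)))
  have hH : HasDerivAt H (I * ((v - 2 * u.re) * (t ^ (v - 1) * normSq (f t)) : ℝ)) t := by
    have hpow : HasDerivAt (fun s : ℝ => ((s ^ v : ℝ) : ℂ)) ((v * t ^ (v - 1) : ℝ) : ℂ) t :=
      (Real.hasDerivAt_rpow_const (Or.inl ht.ne')).ofReal_comp
    refine (hpow.mul (((hf.mul hf'.star).sub (hf.star.mul hf')).add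
      ((hf.mul hf.star).const_mul I))).congr_deriv ?_
    have htv : ((t ^ v : ℝ) : ℂ) = ((t ^ (v - 1) : ℝ) : ℂ) * t := by
      rw [← ofReal_mul, ← Real.rpow_add_one ht.ne', sub_add_cancel]
    have hode' := congrArg conj hode
    simp only [map_mul, map_add, map_sub, conj_I, conj_ofReal] at hode'
    have hre : u + conj u = 2 * (u.re : ℂ) := by rw [add_conj]; push_cast; ring
    simp only [Pi.mul_apply, Pi.sub_apply, Pi.add_apply, Complex.star_def]
    set p := ((t ^ (v - 1) : ℝ) : ℂ)
    simp only [htv, ofReal_mul, ofReal_sub, ofReal_ofNat, ← mul_conj]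
    linear_combination (p * f t) * hode' - (p * conj (f t)) * hode - I * p * f t * conj (f t) * hre
  have hG : (fun s => s ^ v * (normSq (f s) + 2 * (f s * conj (f' s)).im)) = fun s => (H s).im := by
    funext s
    simp only [H, mul_im, ofReal_re, ofReal_im, sub_im, add_im, mul_re, conj_re, conj_im, I_re,
      I_im, normSq_apply]
    ring
  rw [hG]
  refine (Complex.imCLM.hasFDerivAt.comp_hasDerivAt t hH).congr_deriv ?_
  simp

theorem eq_zero_of_hasDerivAt_mul_of_eq {G p : ℝ → ℝ} {a b c : ℝ} (hab : a < b)
    (hG : ContinuousOn G (Icc a b)) (hG' : ∀ t ∈ Ioo a b, HasDerivAt G (c * p t) t)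
    (hp : ∀ t ∈ Ioo a b, 0 ≤ p t) (hp₀ : ∀ᶠ t in 𝓝[>] a, 0 < p t) (hGab : G a = G b) :
    c = 0 := by
  by_contra hc
  -- `c * G` has derivative `c² p`: it is monotone on `[a, b]` and strictly increasing near `a`.
  obtain ⟨e, he, hpe⟩ := mem_nhdsGT_iff_exists_Ioo_subset.1 hp₀
  set d := min e b
  have hd : a < d := lt_min he hab
  have hK : ∀ t ∈ Ioo a b, HasDerivWithinAt (fun s => c * G s) (c ^ 2 * p t) (Ioo a b) t :=
    fun t ht => by simpa [pow_two, mul_assoc] using ((hG' t ht).const_mul c).hasDerivWithinAt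
  have hKc : ContinuousOn (fun s => c * G s) (Icc a b) := continuousOn_const.mul hG
  have hmono : MonotoneOn (fun s => c * G s) (Icc a b) :=
    monotoneOn_of_hasDerivWithinAt_nonneg (convex_Icc a b) hKc (by simpa using hK)
      (fun t ht => by rw [interior_Icc] at ht; have := hp t ht; positivity)
  have hstrict : StrictMonoOn (fun s => c * G s) (Icc a d) := by
    refine strictMonoOn_of_hasDerivWithinAt_pos (f' := fun t => c ^ 2 * p t) (convex_Icc a d)
      (hKc.mono (Icc_subset_Icc le_rfl (min_le_right _ _))) (fun t ht => ?_) (fun t ht => ?_)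
    · rw [interior_Icc] at ht ⊢
      exact (hK t ⟨ht.1, ht.2.trans_le (min_le_right _ _)⟩).mono
        (Ioo_subset_Ioo le_rfl (min_le_right _ _))
    · rw [interior_Icc] at ht
      have := hpe ⟨ht.1, ht.2.trans_le (min_le_left _ _)⟩
      simp only [mem_ofPred_eq] at this
      positivity
  have h₁ := hstrict (left_mem_Icc.2 hd.le) (right_mem_Icc.2 hd.le) hd
  have h₂ := hmono ⟨hd.le, min_le_right _ _⟩ (right_mem_Icc.2 hab.le) (min_le_right _ _)
  simp only [hGab] at h₁ h₂
  linarith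

theorem re_eq_half_of_kummer_mul_I_eq_zero {u : ℂ} {v t₀ : ℝ} (hv : 0 < v) (ht₀ : 0 < t₀)
    (h : kummer u v (t₀ * I) = 0) : u.re = v / 2 := by
  have hb : 0 < (v : ℂ).re := by simpa using hv
  set c := kummerCoeff u v
  have hc : HasInfiniteRadius c := hasInfiniteRadius_kummerCoeff hb
  set f : ℝ → ℂ := fun t => powSum c (t * I)
  set f' : ℝ → ℂ := fun t => powSum (derivCoeff c) (t * I) * I
  set f'' : ℝ → ℂ := fun t => powSum (derivCoeff (derivCoeff c)) (t * I) * I * I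
  have hf (t : ℝ) : HasDerivAt f (f' t) t := hc.hasDerivAt_mul_I t
  have hf' (t : ℝ) : HasDerivAt f' (f'' t) t :=
    ((hasInfiniteRadius_derivCoeff hc).hasDerivAt_mul_I t).mul_const I
  have hode (t : ℝ) : t * f'' t = I * u * f t + (I * t - v) * f' t := by
    simp only [f, f', f'']
    linear_combination I * hc.kummer_ode_of_recurrence (derivCoeff_kummerCoeff hb) (t * I)
  have hfc : Continuous f := continuous_iff_continuousAt.2 fun t => (hf t).continuousAt
  have hf'c : Continuous f' := continuous_iff_continuousAt.2 fun t => (hf' t).continuousAt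
  have hf0 : f 0 = 1 := by simp [f, powSum_zero, c, kummerCoeff_zero]
  have hpos : ∀ᶠ t in 𝓝[>] 0, 0 < t ^ (v - 1) * normSq (f t) := by
    filter_upwards [self_mem_nhdsWithin,
      nhdsWithin_le_nhds (hfc.continuousAt.eventually_ne (hf0 ▸ one_ne_zero))] with t ht hft
    exact mul_pos (Real.rpow_pos_of_pos ht _) (normSq_pos.2 hft)
  have hft₀ : f t₀ = 0 := h
  have key := eq_zero_of_hasDerivAt_mul_of_eq ht₀
    ((Real.continuous_rpow_const hv.le).mul (by fun_prop)).continuousOn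
    (fun t ht => hasDerivAt_rpow_mul_energy ht.1 (hf t) (hf' t) (hode t))
    (fun t ht => mul_nonneg (Real.rpow_nonneg ht.1.le _) (normSq_nonneg _)) hpos
    (by simp [hft₀, Real.zero_rpow hv.ne'])
  linarith

/-- If `₁F₁(u, v, z) = 0` with `v > 0` real and `z ≠ 0` purely imaginary,
then `Re u = v/2`. -/
theorem kummer_zero_re_eq_half (u : ℂ) (v : ℝ) (hv : 0 < v)
    (z : ℂ) (hz : z.re = 0) (hz0 : z ≠ 0)
    (h : kummer u (v : ℂ) z = 0) :
    u.re = v / 2 := by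
  obtain ⟨t, rfl⟩ : ∃ t : ℝ, z = t * I := ⟨z.im, by apply Complex.ext <;> simp [hz]⟩
  have ht : t ≠ 0 := by rintro rfl; simp at hz0
  rcases ht.lt_or_gt with ht | ht
  · have h' : kummer (conj u) v ((-t : ℝ) * I) = 0 := by
      simpa [conj_kummer] using congrArg conj h
    simpa using re_eq_half_of_kummer_mul_I_eq_zero hv (neg_pos.2 ht) h'
  · exact re_eq_half_of_kummer_mul_I_eq_zero hv ht h
end

section
/- For a > 0 and Re(s) > 0, ∫_R e^{−πi a x²} |x|^{s} dx/|x| = a^{−s/2} e^{−sπi/4} Γ(s/2) / π^{s/2}, where the integral is understood as the limit of the absolutely convergent integrals ∫_R e^{−πi(a−iε)x²}|x|^{s−1} dx as ε → 0⁺. -/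
/-! The Laplace transform `∫₀^∞ t^(w-1) e^(-bt) dt = b^(-w) Γ(w)` holds for real `b > 0` by
scaling, and extends to `Re b > 0` by the identity theorem, both sides being holomorphic in `b`.
Substituting `t = x²` and using evenness gives `∫_ℝ e^(-bx²) |x|^(s-1) dx = b^(-s/2) Γ(s/2)`.
The integral of the theorem is this one at `b = πi(a - iε)`, which tends to `πia` as `ε → 0⁺`;
since `πia` lies in the slit plane, `b ↦ b^(-s/2)` is continuous there, and
`(πia)^(-s/2) = (πa)^(-s/2) e^(-πis/4)`. -/

open MeasureTheory Real Filter Set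
open scoped Topology Complex

theorem integral_comp_abs_eq_two_smul {E : Type*} [NormedAddCommGroup E] [NormedSpace ℝ E]
    (f : ℝ → E) :
    ∫ x, f |x| = (2 : ℝ) • ∫ x in Ioi 0, f x := by
  have h_Ioi : ∫ x in Ioi 0, f |x| = ∫ x in Ioi 0, f x :=
    setIntegral_congr_fun measurableSet_Ioi fun x hx ↦ by rw [abs_of_pos hx]
  by_cases hf : IntegrableOn (fun x ↦ f |x|) (Ioi 0)
  · have hf' : IntegrableOn (fun x ↦ f |x|) (Iic 0) := by
      rw [← Measure.map_neg_eq_self (volume : Measure ℝ)]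
      let m : MeasurableEmbedding fun x : ℝ ↦ -x := (Homeomorph.neg ℝ).measurableEmbedding
      rw [m.integrableOn_map_iff]
      simpa [Function.comp_def] using (integrableOn_Ici_iff_integrableOn_Ioi).mpr hf
    have h_Iic : ∫ x in Iic 0, f |x| = ∫ x in Ioi 0, f x := by
      rw [← h_Ioi, ← neg_zero, ← integral_comp_neg_Ioi, neg_zero]
      simp_rw [abs_neg]
    rw [← integral_add_compl measurableSet_Ioi (integrableOn_univ.mp (by simpa using hf'.union hf)),
      compl_Ioi, h_Ioi, h_Iic, two_smul]
  · have hf_int : ¬ Integrable fun x ↦ f |x| := fun h ↦ hf h.integrableOn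
    rw [← h_Ioi, integral_undef hf, integral_undef hf_int, smul_zero]

lemma norm_cpow_mul_cexp_neg_mul {t : ℝ} (ht : 0 < t) (z b : ℂ) :
    ‖(t : ℂ) ^ z * cexp (-b * t)‖ = t ^ z.re * rexp (-(b.re * t)) := by
  rw [norm_mul, Complex.norm_cpow_eq_rpow_re_of_pos ht, Complex.norm_exp]
  simp

lemma integrableOn_rpow_mul_exp_neg_mul {r c : ℝ} (hr : -1 < r) (hc : 0 < c) :
    IntegrableOn (fun t : ℝ ↦ t ^ r * rexp (-(c * t))) (Ioi 0) := by
  simpa using integrableOn_rpow_mul_exp_neg_mul_rpow hr one_pos hc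

lemma integrableOn_cpow_mul_cexp_neg_mul {z b : ℂ} (hz : -1 < z.re) (hb : 0 < b.re) :
    IntegrableOn (fun t : ℝ ↦ (t : ℂ) ^ z * cexp (-b * t)) (Ioi 0) := by
  refine (integrableOn_rpow_mul_exp_neg_mul hz hb).mono' (by fun_prop) ?_
  filter_upwards [ae_restrict_mem measurableSet_Ioi] with t ht
  rw [norm_cpow_mul_cexp_neg_mul ht]

lemma differentiableAt_mellin_cexp_neg_mul {w b₀ : ℂ} (hw : 0 < w.re) (hb₀ : 0 < b₀.re) :
    DifferentiableAt ℂ (fun b ↦ mellin (fun t : ℝ ↦ cexp (-b * t)) w) b₀ := by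
  obtain ⟨c, hc, hcb⟩ := exists_between hb₀
  have h_re : ∀ b ∈ Metric.ball b₀ (b₀.re - c), c ≤ b.re := fun b hb ↦ by
    have := (Complex.abs_re_le_norm (b - b₀)).trans (mem_ball_iff_norm.mp hb).le
    rw [Complex.sub_re] at this
    linarith [abs_le.mp this]
  have h_deriv (t : ℝ) (ht : 0 < t) (b : ℂ) :
      HasDerivAt (fun b : ℂ ↦ (t : ℂ) ^ (w - 1) • cexp (-b * t))
        (-((t : ℂ) ^ w * cexp (-b * t))) b := by
    refine ((((hasDerivAt_id b).neg.mul_const (t : ℂ)).cexp).const_mul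
      ((t : ℂ) ^ (w - 1))).congr_deriv ?_
    have ht' : (t : ℂ) ≠ 0 := Complex.ofReal_ne_zero.mpr ht.ne'
    simp only [Pi.neg_apply, id_eq, Complex.cpow_sub _ _ ht', Complex.cpow_one]
    field_simp
  obtain ⟨-, h⟩ := hasDerivAt_integral_of_dominated_loc_of_deriv_le
    (μ := volume.restrict (Ioi 0)) (F := fun b t ↦ (t : ℂ) ^ (w - 1) • cexp (-b * t))
    (F' := fun b t ↦ -((t : ℂ) ^ w * cexp (-b * t))) (bound := fun t ↦ t ^ w.re * rexp (-(c * t)))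
    (Metric.ball_mem_nhds b₀ (sub_pos.mpr hcb)) (Eventually.of_forall fun b ↦ by fun_prop)
    (integrableOn_cpow_mul_cexp_neg_mul (by simpa using hw) hb₀) (by fun_prop)
    (by
      filter_upwards [ae_restrict_mem measurableSet_Ioi] with t ht b hb
      rw [norm_neg, norm_cpow_mul_cexp_neg_mul ht]
      exact mul_le_mul_of_nonneg_left
        (exp_le_exp.mpr (neg_le_neg (mul_le_mul_of_nonneg_right (h_re b hb) (le_of_lt ht))))
        (rpow_nonneg (le_of_lt ht) _))
    (integrableOn_rpow_mul_exp_neg_mul (by linarith) hc)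
    (by
      filter_upwards [ae_restrict_mem measurableSet_Ioi] with t ht b _
      exact h_deriv t ht b)
  exact h.differentiableAt

lemma mellin_cexp_neg_ofReal_mul {w : ℂ} (hw : 0 < w.re) {r : ℝ} (hr : 0 < r) :
    mellin (fun t : ℝ ↦ cexp (-r * t)) w = (r : ℂ) ^ (-w) * Complex.Gamma w := by
  have := mellin_comp_mul_left (fun t : ℝ ↦ ((rexp (-t) : ℝ) : ℂ)) w hr
  rw [← Complex.GammaIntegral_eq_mellin, ← Complex.Gamma_eq_integral hw, smul_eq_mul] at this
  simpa [neg_mul] using this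

lemma frequently_ofReal_pos_nhdsNE_one : ∃ᶠ z in 𝓝[≠] (1 : ℂ), ∃ r : ℝ, 0 < r ∧ z = (r : ℂ) := by
  have h_tendsto : Tendsto ((↑) : ℝ → ℂ) (𝓝[≠] (1 : ℝ)) (𝓝[≠] 1) :=
    tendsto_nhdsWithin_of_tendsto_nhds_of_eventually_within _
      (Complex.continuous_ofReal.tendsto' 1 1 Complex.ofReal_one |>.mono_left nhdsWithin_le_nhds)
      (eventually_nhdsWithin_of_forall fun r hr ↦ by simpa using hr)
  refine h_tendsto.frequently (Eventually.frequently ?_)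
  filter_upwards [nhdsWithin_le_nhds (lt_mem_nhds one_pos)] with r hr using ⟨r, hr, rfl⟩

theorem mellin_cexp_neg_mul {w b : ℂ} (hw : 0 < w.re) (hb : 0 < b.re) :
    mellin (fun t : ℝ ↦ cexp (-b * t)) w = b ^ (-w) * Complex.Gamma w := by
  have h_open : IsOpen {b : ℂ | 0 < b.re} := isOpen_lt continuous_const Complex.continuous_re
  have h_lhs : AnalyticOnNhd ℂ (fun b ↦ mellin (fun t : ℝ ↦ cexp (-b * t)) w) {b | 0 < b.re} :=
    DifferentiableOn.analyticOnNhd (fun b hb ↦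
      (differentiableAt_mellin_cexp_neg_mul hw hb).differentiableWithinAt) h_open
  have h_rhs : AnalyticOnNhd ℂ (fun b ↦ b ^ (-w) * Complex.Gamma w) {b | 0 < b.re} :=
    DifferentiableOn.analyticOnNhd (fun b hb ↦
      ((differentiableAt_id.cpow_const (.inl hb)).mul_const _).differentiableWithinAt) h_open
  refine h_lhs.eqOn_of_preconnected_of_frequently_eq h_rhs
    (convex_halfSpace_re_gt 0).isPreconnected (show (0 : ℝ) < (1 : ℂ).re by simp) ?_ hb
  refine frequently_ofReal_pos_nhdsNE_one.mono ?_
  rintro _ ⟨r, hr, rfl⟩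
  exact mellin_cexp_neg_ofReal_mul hw hr

theorem mellin_cexp_neg_mul_sq {s b : ℂ} (hs : 0 < s.re) (hb : 0 < b.re) :
    mellin (fun t : ℝ ↦ cexp (-b * t ^ 2)) s = b ^ (-(s / 2)) * Complex.Gamma (s / 2) / 2 := by
  have h_comp := mellin_comp_rpow (fun u : ℝ ↦ cexp (-b * u)) s 2
  simp only [rpow_two, Complex.ofReal_pow] at h_comp
  rw [h_comp, mellin_cexp_neg_mul (by simpa using hs) hb]
  simp [div_eq_inv_mul]

theorem integral_cexp_neg_mul_sq_mul_abs_cpow {s b : ℂ} (hs : 0 < s.re) (hb : 0 < b.re) :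
    ∫ x : ℝ, cexp (-b * x ^ 2) * ((|x| : ℝ) : ℂ) ^ (s - 1)
      = b ^ (-(s / 2)) * Complex.Gamma (s / 2) := by
  have h_even : (fun x : ℝ ↦ cexp (-b * x ^ 2) * ((|x| : ℝ) : ℂ) ^ (s - 1))
      = fun x ↦ (fun t : ℝ ↦ (t : ℂ) ^ (s - 1) • cexp (-b * t ^ 2)) |x| := by
    ext x
    beta_reduce
    rw [smul_eq_mul, mul_comm, ← Complex.ofReal_pow, ← Complex.ofReal_pow, sq_abs]
  rw [h_even, integral_comp_abs_eq_two_smul fun t : ℝ ↦ (t : ℂ) ^ (s - 1) • cexp (-b * t ^ 2),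
    ← mellin, mellin_cexp_neg_mul_sq hs hb, Complex.real_smul]
  push_cast
  ring

lemma ofReal_mul_I_cpow {r : ℝ} (hr : 0 < r) (z : ℂ) :
    ((r : ℂ) * Complex.I) ^ z = (r : ℂ) ^ z * cexp (z * (π / 2) * Complex.I) := by
  have hr' : (r : ℂ) ≠ 0 := Complex.ofReal_ne_zero.mpr hr.ne'
  rw [Complex.cpow_def_of_ne_zero (mul_ne_zero hr' Complex.I_ne_zero),
    Complex.log_ofReal_mul hr Complex.I_ne_zero, Complex.log_I, Complex.cpow_def_of_ne_zero hr',
    Complex.ofReal_log hr.le, ← Complex.exp_add]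
  ring_nf

/-- For `a > 0` and `Re s > 0`,
`∫_ℝ e^{−πi a x²} |x|^s dx/|x| = a^{−s/2} e^{−sπi/4} Γ(s/2)/π^{s/2}`,
the integral being understood as the limit, as `ε → 0⁺`, of the absolutely
convergent integrals `∫_ℝ e^{−πi(a−iε)x²} |x|^{s−1} dx`. -/
theorem mellin_real_second_degree_character (a : ℝ) (ha : 0 < a)
    (s : ℂ) (hs : 0 < s.re) :
    Tendsto
      (fun ε : ℝ =>
        ∫ x : ℝ,
          Complex.exp (-(π : ℂ) * Complex.I * ((a : ℂ) - (ε : ℂ) * Complex.I) * (x : ℂ) ^ 2)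
            * ((|x| : ℝ) : ℂ) ^ (s - 1))
      (nhdsWithin 0 (Set.Ioi 0))
      (nhds ((a : ℂ) ^ (-s / 2) * Complex.exp (-s * (π : ℂ) * Complex.I / 4)
        * Complex.Gamma (s / 2) / (π : ℂ) ^ (s / 2))) := by
  set b : ℝ → ℂ := fun ε ↦ π * Complex.I * (a - ε * Complex.I)
  have h_lim : Tendsto b (𝓝[>] 0) (𝓝 (((π * a : ℝ) : ℂ) * Complex.I)) := by
    refine (Continuous.tendsto' (by fun_prop) _ _ ?_).mono_left nhdsWithin_le_nhds
    push_cast [b]; ring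
  have h_slit : ((π * a : ℝ) : ℂ) * Complex.I ∈ Complex.slitPlane :=
    Complex.mem_slitPlane_iff.mpr (.inr (by simp; positivity))
  have h_value : (((π * a : ℝ) : ℂ) * Complex.I) ^ (-(s / 2)) * Complex.Gamma (s / 2)
      = (a : ℂ) ^ (-s / 2) * Complex.exp (-s * (π : ℂ) * Complex.I / 4)
        * Complex.Gamma (s / 2) / (π : ℂ) ^ (s / 2) := by
    rw [ofReal_mul_I_cpow (by positivity), Complex.ofReal_mul,
      Complex.mul_cpow_ofReal_nonneg pi_pos.le ha.le, Complex.cpow_neg _ (s / 2), neg_div]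
    ring_nf
  rw [← h_value]
  refine Tendsto.congr' ?_ (((continuousAt_cpow_const h_slit).tendsto.comp h_lim).mul_const _)
  filter_upwards [self_mem_nhdsWithin] with ε (hε : 0 < ε)
  have hb : 0 < (b ε).re := by simp [b]; positivity
  simpa [b, neg_mul] using (integral_cexp_neg_mul_sq_mul_abs_cpow hs hb).symm
end
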